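/- Let G be a finite simple graph with m > 0 edges, and let S and S* be disjoint finite sets of vertices of G with S nonempty, S* nonempty, and CM(S) ≥ 0. If CM(S) ≥ CM(S ∪ S*), then DM(S) ≥ DM(S ∪ S*). (If the classic modularity does not suffer from the resolution limit problem when merging the disjoint community S* into S, then neither does the density modularity.) -/

import Mathlib

open Finset

/-- Number of edges of `G` with both endpoints in `C`. -/
noncomputable def numEdgesIn {V : Type*} [Fintype V] [DecidableEq V]
    (G : SimpleGraph V) [DecidableRel G.Adj] (C : Finset V) : ℕ :=
  (G.edgeFinset.filter fun e => ∀ v ∈ e, v ∈ C).card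

/-- Sum over `C` of the degrees taken in `G`. -/
def degSum {V : Type*} [Fintype V] [DecidableEq V]
    (G : SimpleGraph V) [DecidableRel G.Adj] (C : Finset V) : ℕ :=
  ∑ v ∈ C, G.degree v

/-- Classic modularity. -/
noncomputable def CM {V : Type*} [Fintype V] [DecidableEq V]
    (G : SimpleGraph V) [DecidableRel G.Adj] (C : Finset V) : ℝ :=
  (1 / (2 * (G.edgeFinset.card : ℝ))) *
    (2 * (numEdgesIn G C : ℝ) -
      (degSum G C : ℝ) ^ 2 / (2 * (G.edgeFinset.card : ℝ)))

/-- Density modularity. -/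
noncomputable def DM {V : Type*} [Fintype V] [DecidableEq V]
    (G : SimpleGraph V) [DecidableRel G.Adj] (C : Finset V) : ℝ :=
  (1 / (2 * (C.card : ℝ))) *
    (2 * (numEdgesIn G C : ℝ) -
      (degSum G C : ℝ) ^ 2 / (2 * (G.edgeFinset.card : ℝ)))

/-! Both modularities scale the same quantity `2 l_C - d_C² / (2m)`, by `1 / (2m)` and by
`1 / (2|C|)` respectively. So the hypotheses say that this quantity is nonnegative on `S` and
does not grow when passing to `S ∪ S*`, while the size of the community does grow. -/

section Modularity

variable {V : Type*} [Fintype V] [DecidableEq V] (G : SimpleGraph V) [DecidableRel G.Adj]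

noncomputable def modularityNumerator (C : Finset V) : ℝ :=
  2 * (numEdgesIn G C : ℝ) - (degSum G C : ℝ) ^ 2 / (2 * (G.edgeFinset.card : ℝ))

theorem CM_eq_div (C : Finset V) :
    CM G C = modularityNumerator G C / (2 * (G.edgeFinset.card : ℝ)) :=
  one_div_mul_eq_div _ _

theorem DM_eq_div (C : Finset V) :
    DM G C = modularityNumerator G C / (2 * (C.card : ℝ)) :=
  one_div_mul_eq_div _ _

variable {G}

theorem CM_le_CM_iff (hm : 0 < G.edgeFinset.card) {C D : Finset V} :
    CM G C ≤ CM G D ↔ modularityNumerator G C ≤ modularityNumerator G D := by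
  rw [CM_eq_div, CM_eq_div]
  exact div_le_div_iff_of_pos_right (by positivity)

theorem CM_nonneg_iff (hm : 0 < G.edgeFinset.card) {C : Finset V} :
    0 ≤ CM G C ↔ 0 ≤ modularityNumerator G C := by
  rw [CM_eq_div, le_div_iff₀ (by positivity), zero_mul]

theorem DM_le_DM_of_subset {C D : Finset V} (hCD : C ⊆ D) (hC : C.Nonempty)
    (hnonneg : 0 ≤ modularityNumerator G C)
    (hle : modularityNumerator G D ≤ modularityNumerator G C) :
    DM G D ≤ DM G C := by
  rw [DM_eq_div, DM_eq_div]
  exact div_le_div₀ hnonneg hle (by simpa using hC) (by gcongr)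

end Modularity

theorem cm_no_resolution_limit_implies_dm_no_resolution_limit_general
    {V : Type*} [Fintype V] [DecidableEq V]
    (G : SimpleGraph V) [DecidableRel G.Adj]
    (S Sstar : Finset V)
    (hm : 0 < G.edgeFinset.card)
    (hS : S.Nonempty)
    (hCM : 0 ≤ CM G S)
    (h : CM G (S ∪ Sstar) ≤ CM G S) :
    DM G (S ∪ Sstar) ≤ DM G S :=
  DM_le_DM_of_subset subset_union_left hS ((CM_nonneg_iff hm).1 hCM) ((CM_le_CM_iff hm).1 h)

/-- For disjoint merges, if the classic modularity does not suffer from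
the resolution limit problem, then neither does the density modularity. -/
theorem cm_no_resolution_limit_implies_dm_no_resolution_limit
    {V : Type*} [Fintype V] [DecidableEq V]
    (G : SimpleGraph V) [DecidableRel G.Adj]
    (S Sstar : Finset V)
    (hm : 0 < G.edgeFinset.card)
    (hdisj : Disjoint S Sstar)
    (hS : S.Nonempty) (hSstar : Sstar.Nonempty)
    (hCM : 0 ≤ CM G S)
    (h : CM G (S ∪ Sstar) ≤ CM G S) :
    DM G (S ∪ Sstar) ≤ DM G S :=
  cm_no_resolution_limit_implies_dm_no_resolution_limit_general G S Sstar hm hS hCM h
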